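/- arXiv:2404.07819 — 6 statements merged into one kernel-verified Lean document; each statement's English description precedes it below -/
import Mathlib

section
/- If e is an edge of a finite simple graph G with both endpoints of degree at least 2, and deleting e disconnects G (e is a bridge with each side containing another edge), then removing the vertex e from the line graph L(G) disconnects L(G); hence L(G) is not 2-connected. -/
open SimpleGraph

/-- A graph is 2-connected: at least 3 vertices, and deleting any single vertex leaves a
connected graph. -/
def TwoConnected {W : Type*} (H : SimpleGraph W) : Prop :=
  3 ≤ Nat.card W ∧ ∀ w : W, (H.induce {x : W | x ≠ w}).Connected

/-!
Let `G' = G - uv`. Two edges of `G` other than `uv` that are adjacent in `L(G)` share an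
endpoint, so by induction along a walk in `L(G) - uv` all endpoints of edges in one component
of `L(G) - uv` lie in one component of `G'`. Since `deg u, deg v ≥ 2` there are edges `uw` and
`vx` different from `uv`; if `L(G) - uv` were connected, `u` and `v` would be joined in `G'`,
so `uv` would not be a bridge.
-/

namespace SimpleGraph

variable {V : Type*} {G : SimpleGraph V}

lemma reachable_of_mem_edgeSet {f : Sym2 V} (hf : f ∈ G.edgeSet) {y z : V} (hy : y ∈ f)
    (hz : z ∈ f) : G.Reachable y z := by
  obtain rfl | hyz := eq_or_ne y z
  · rfl
  · obtain rfl := (Sym2.mem_and_mem_iff hyz).1 ⟨hy, hz⟩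
    exact Adj.reachable hf

lemma reachable_deleteEdges_of_reachable_induce_lineGraph {s : Set (Sym2 V)}
    {c d : {f : G.edgeSet | (f : Sym2 V) ∉ s}}
    (hcd : (G.lineGraph.induce {f : G.edgeSet | (f : Sym2 V) ∉ s}).Reachable c d)
    {y z : V} (hy : y ∈ (c : Sym2 V)) (hz : z ∈ (d : Sym2 V)) :
    (G.deleteEdges s).Reachable y z := by
  have mem_deleteEdges (f : {f : G.edgeSet | (f : Sym2 V) ∉ s}) :
      (f : Sym2 V) ∈ (G.deleteEdges s).edgeSet := by
    rw [edgeSet_deleteEdges]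
    exact ⟨f.1.2, f.2⟩
  obtain ⟨p⟩ := hcd
  induction p generalizing y with
  | nil => exact reachable_of_mem_edgeSet (mem_deleteEdges _) hy hz
  | @cons c c' d hadj _ ih =>
    obtain ⟨-, t, htc, htc'⟩ := lineGraph_adj_iff_exists.1 hadj
    exact (reachable_of_mem_edgeSet (mem_deleteEdges c) hy htc).trans (ih htc' hz)

lemma not_connected_induce_ne_of_isBridge {u v w x : V} (huv : G.IsBridge s(u, v))
    (huw : G.Adj u w) (hwv : w ≠ v) (hvx : G.Adj v x) (hxu : x ≠ u) :
    ¬ (G.lineGraph.induce {f : G.edgeSet | (f : Sym2 V) ≠ s(u, v)}).Connected := by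
  intro hconn
  have hvu : v ≠ u := by
    rintro rfl
    exact isBridge_iff.1 huv .rfl
  have huw_ne : s(u, w) ≠ s(u, v) := by simp [hwv, hvu.symm]
  have hvx_ne : s(v, x) ≠ s(u, v) := by simp [hxu, hvu]
  exact isBridge_iff.1 huv <| reachable_deleteEdges_of_reachable_induce_lineGraph
    (hconn.preconnected ⟨⟨_, huw⟩, huw_ne⟩ ⟨⟨_, hvx⟩, hvx_ne⟩) (Sym2.mem_mk_left u w)
    (Sym2.mem_mk_left v x)

end SimpleGraph

theorem stmt_4_general {V : Type*} (G : SimpleGraph V) (hG : G.Connected)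
    (u v : V) (huv : G.Adj u v)
    (hu : 2 ≤ (G.neighborSet u).ncard) (hv : 2 ≤ (G.neighborSet v).ncard)
    (hbridge : ¬ (G.deleteEdges {s(u, v)}).Connected) :
    ¬ (G.lineGraph.induce {f : G.edgeSet | (f : Sym2 V) ≠ s(u, v)}).Connected ∧
      ¬ TwoConnected G.lineGraph := by
  have hIsBridge : G.IsBridge s(u, v) :=
    not_not.1 fun h ↦ hbridge (hG.connected_delete_edge_of_not_isBridge h)
  obtain ⟨w, huw, hwv⟩ := Set.exists_ne_of_one_lt_ncard hu v
  obtain ⟨x, hvx, hxu⟩ := Set.exists_ne_of_one_lt_ncard hv u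
  have hsplit := not_connected_induce_ne_of_isBridge hIsBridge huw hwv hvx hxu
  have hset :
      {f : G.edgeSet | f ≠ ⟨s(u, v), huv⟩} = {f : G.edgeSet | (f : Sym2 V) ≠ s(u, v)} := by
    ext f
    simp [Subtype.ext_iff]
  exact ⟨hsplit, fun hL ↦ hsplit (hset ▸ hL.2 ⟨s(u, v), huv⟩)⟩

/-- If `e = uv` is a bridge of a finite connected graph `G` with both endpoints of degree
at least 2, then deleting the vertex `e` from the line graph disconnects it; hence the
line graph is not 2-connected. -/
theorem stmt_4 {V : Type*} [Fintype V] (G : SimpleGraph V) (hG : G.Connected)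
    (u v : V) (huv : G.Adj u v)
    (hu : 2 ≤ (G.neighborSet u).ncard) (hv : 2 ≤ (G.neighborSet v).ncard)
    (hbridge : ¬ (G.deleteEdges {s(u, v)}).Connected) :
    ¬ (G.lineGraph.induce {f : G.edgeSet | (f : Sym2 V) ≠ s(u, v)}).Connected ∧
      ¬ TwoConnected G.lineGraph :=
  stmt_4_general G hG u v huv hu hv hbridge
end

section
/- Let G be a finite simple graph and u a vertex of degree 4 with neighbours a, b, c, d. If the graph G - {ua, ub, uc, ud} (G with these four edges deleted) has the property that a lies in a different connected component from each of b, c, d, then the edge ua is a cut vertex of the line graph L(G), i.e. L(G) minus the vertex ua is disconnected (assuming L(G) has at least 3 vertices). -/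
/-!
Remove the edges at `u` and call the result `G'`. An edge of `G` other than `ua` that has an
endpoint in the `G'`-component of `a` has both endpoints there: if it avoids `u` it survives in
`G'`, and if it is `uy` with `y ≠ a`, then neither `u` (isolated in `G'`) nor `y` (by the
separation hypothesis) lies in that component. So in `L(G) - ua` the edges meeting the component
of `a` are closed under adjacency; they contain an edge `ax` with `x ≠ u` (as `deg a ≥ 2`) but
not `ub`.
-/

open SimpleGraph

namespace SimpleGraph

variable {V : Type*} {G : SimpleGraph V}

theorem Reachable.of_adj_closed {p : V → Prop} (hp : ∀ ⦃x y⦄, G.Adj x y → p x → p y)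
    {x y : V} (h : G.Reachable x y) (hx : p x) : p y := by
  obtain ⟨w⟩ := h
  induction w with
  | nil => exact hx
  | cons hadj _ ih => exact ih (hp hadj hx)

theorem deleteIncidenceSet_le_deleteEdges {u : V} {S : Set (Sym2 V)} (hS : ∀ e ∈ S, u ∈ e) :
    G.deleteIncidenceSet u ≤ G.deleteEdges S := by
  intro x y hxy
  obtain ⟨hadj, hxu, hyu⟩ := deleteIncidenceSet_adj.mp hxy
  refine deleteEdges_adj.mpr ⟨hadj, fun hmem => ?_⟩
  rcases Sym2.mem_iff.mp (hS _ hmem) with rfl | rfl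
  exacts [hxu rfl, hyu rfl]

theorem eq_of_reachable_deleteIncidenceSet {u a : V}
    (h : (G.deleteIncidenceSet u).Reachable a u) : a = u := by
  by_contra hne
  obtain ⟨y, hy⟩ := h.symm.nonempty_neighborSet_left (Ne.symm hne)
  exact (deleteIncidenceSet_adj.mp hy).2.1 rfl

section LineGraph

variable {u a : V} (hau : a ≠ u)
  (hsep : ∀ y, G.Adj u y → y ≠ a → ¬ (G.deleteIncidenceSet u).Reachable a y)
include hau hsep

theorem reachable_deleteIncidenceSet_of_adj {x y : V} (hxy : G.Adj x y) (hne : s(x, y) ≠ s(u, a))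
    (hx : (G.deleteIncidenceSet u).Reachable a x) : (G.deleteIncidenceSet u).Reachable a y := by
  have hxu : x ≠ u := by
    rintro rfl
    exact hau (eq_of_reachable_deleteIncidenceSet hx)
  have hyu : y ≠ u := by
    rintro rfl
    refine hsep x hxy.symm (fun hxa => hne ?_) hx
    rw [hxa, Sym2.eq_swap]
  exact hx.trans (deleteIncidenceSet_adj.mpr ⟨hxy, hxu, hyu⟩).reachable

theorem exists_mem_reachable_of_lineGraph_adj {e f : G.edgeSet} (hne : (e : Sym2 V) ≠ s(u, a))
    (hef : G.lineGraph.Adj e f)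
    (hside : ∃ v ∈ (e : Sym2 V), (G.deleteIncidenceSet u).Reachable a v) :
    ∃ v ∈ (f : Sym2 V), (G.deleteIncidenceSet u).Reachable a v := by
  obtain ⟨-, v, hve, hvf⟩ := lineGraph_adj_iff_exists.mp hef
  refine ⟨v, hvf, ?_⟩
  obtain ⟨e, he⟩ := e
  induction e using Sym2.ind with | _ x y => ?_
  obtain ⟨w, hwe, hw⟩ := hside
  rcases Sym2.mem_iff.mp hwe with rfl | rfl <;> rcases Sym2.mem_iff.mp hve with rfl | rfl
  · exact hw
  · exact reachable_deleteIncidenceSet_of_adj hau hsep he hne hw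
  · exact reachable_deleteIncidenceSet_of_adj hau hsep he.symm (by rwa [Sym2.eq_swap]) hw
  · exact hw

theorem not_preconnected_induce_lineGraph {x b : V} (hax : G.Adj a x) (hxu : x ≠ u)
    (hub : G.Adj u b) (hba : b ≠ a) :
    ¬ (G.lineGraph.induce {f : G.edgeSet | (f : Sym2 V) ≠ s(u, a)}).Preconnected := by
  intro hconn
  have hax_ne : s(a, x) ≠ s(u, a) := fun h => by
    rcases Sym2.eq_iff.mp h with ⟨h, -⟩ | ⟨-, h⟩
    exacts [hau h, hxu h]
  have hub_ne : s(u, b) ≠ s(u, a) := fun h => hba (Sym2.congr_right.mp h)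
  have hside := (hconn ⟨⟨s(a, x), hax⟩, hax_ne⟩ ⟨⟨s(u, b), hub⟩, hub_ne⟩).of_adj_closed
    (p := fun f : {f : G.edgeSet | (f : Sym2 V) ≠ s(u, a)} =>
      ∃ v ∈ (f.1 : Sym2 V), (G.deleteIncidenceSet u).Reachable a v)
    (fun e _ hef he => exists_mem_reachable_of_lineGraph_adj hau hsep e.2 hef he)
    (⟨a, Sym2.mem_mk_left a x, .rfl⟩ : ∃ v ∈ s(a, x), (G.deleteIncidenceSet u).Reachable a v)
  obtain ⟨v, hv, hreach⟩ := hside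
  rcases Sym2.mem_iff.mp hv with rfl | rfl
  exacts [hau (eq_of_reachable_deleteIncidenceSet hreach), hsep v hub hba hreach]

end LineGraph

end SimpleGraph

theorem stmt_5_general {V : Type*} (G : SimpleGraph V)
    (u a b c d : V)
    (hnbr : G.neighborSet u = {a, b, c, d})
    (hda : 2 ≤ (G.neighborSet a).ncard)
    (hsep : ∀ w ∈ ({b, c, d} : Set V),
      ¬ (G.deleteEdges {s(u, a), s(u, b), s(u, c), s(u, d)}).Reachable a w) :
    ¬ (G.lineGraph.induce {f : G.edgeSet | (f : Sym2 V) ≠ s(u, a)}).Connected := by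
  have hadj : ∀ y, G.Adj u y ↔ y ∈ ({a, b, c, d} : Set V) := fun y => by
    rw [← hnbr, mem_neighborSet]
  have hua : G.Adj u a := (hadj a).mpr (by simp)
  have hsep' : ∀ y, G.Adj u y → y ≠ a → ¬ (G.deleteIncidenceSet u).Reachable a y := by
    intro y hy hya hreach
    have hy : y ∈ ({b, c, d} : Set V) := ((hadj y).mp hy).resolve_left hya
    refine hsep y hy (hreach.mono (deleteIncidenceSet_le_deleteEdges ?_))
    simp
  have hba : b ≠ a := fun h => hsep b (by simp) (h ▸ .rfl)
  obtain ⟨x, hax, hxu⟩ := Set.exists_ne_of_one_lt_ncard hda u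
  exact fun hconn => not_preconnected_induce_lineGraph hua.ne' hsep' hax hxu
    ((hadj b).mpr (by simp)) hba hconn.preconnected

/-- Let `u` be a vertex of degree 4 in a finite connected graph `G`, with neighbours
`a, b, c, d`, all of degree at least 2. If after deleting the four edges at `u` the
vertex `a` lies in a different component from each of `b, c, d`, then the vertex `ua`
is a cut vertex of the line graph. -/
theorem stmt_5 {V : Type*} [Fintype V] (G : SimpleGraph V) (hG : G.Connected)
    (u a b c d : V)
    (hnbr : G.neighborSet u = {a, b, c, d})
    (hab : a ≠ b) (hac : a ≠ c) (had : a ≠ d) (hbc : b ≠ c) (hbd : b ≠ d) (hcd : c ≠ d)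
    (hda : 2 ≤ (G.neighborSet a).ncard) (hdb : 2 ≤ (G.neighborSet b).ncard)
    (hdc : 2 ≤ (G.neighborSet c).ncard) (hdd : 2 ≤ (G.neighborSet d).ncard)
    (hsep : ∀ w ∈ ({b, c, d} : Set V),
      ¬ (G.deleteEdges {s(u, a), s(u, b), s(u, c), s(u, d)}).Reachable a w)
    (hcard : 3 ≤ Nat.card G.edgeSet) :
    ¬ (G.lineGraph.induce {f : G.edgeSet | (f : Sym2 V) ≠ s(u, a)}).Connected :=
  stmt_5_general G u a b c d hnbr hda hsep
end

section
/- If a finite simple graph Γ is 3-connected and Γ' is obtained from Γ by adding a new vertex adjacent to three pairwise-adjacent vertices of Γ (the vertices of a triangle), then Γ' is 3-connected. -/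
open SimpleGraph

/-- A graph is 3-connected: at least 4 vertices, and deleting any set of at most 2
vertices leaves a connected graph. -/
def ThreeConnected {W : Type*} (H : SimpleGraph W) : Prop :=
  4 ≤ Nat.card W ∧ ∀ s : Set W, s.ncard ≤ 2 → (H.induce sᶜ).Connected

/-- The graph obtained from `Γ` by adding one new vertex (`Sum.inr ()`) joined to the
three vertices `a`, `b`, `c`. -/
def addTriVertex {V : Type*} (Γ : SimpleGraph V) (a b c : V) : SimpleGraph (V ⊕ Unit) :=
  SimpleGraph.fromRel fun p q =>
    match p, q with
    | Sum.inl x, Sum.inl y => Γ.Adj x y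
    | Sum.inr _, Sum.inl x => x = a ∨ x = b ∨ x = c
    | _, _ => False

/-- Adding a new vertex adjacent to the three vertices of a triangle preserves
3-connectivity. -/
theorem stmt_10 {V : Type*} [Fintype V] (Γ : SimpleGraph V) (a b c : V)
    (hab : Γ.Adj a b) (hac : Γ.Adj a c) (hbc : Γ.Adj b c)
    (h3 : ThreeConnected Γ) :
    ThreeConnected (addTriVertex Γ a b c) := by
  classical
  obtain ⟨hcard, hconn⟩ := h3
  constructor
  · have : Nat.card (V ⊕ Unit) = Nat.card V + 1 := by simp [Nat.card_sum]
    omega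
  · intro s hs
    set t : Set V := Sum.inl ⁻¹' s with ht
    have htsub : Sum.inl '' t ⊆ s := by
      rintro _ ⟨x, hx, rfl⟩; exact hx
    have hts : t.ncard ≤ 2 := by
      have h1 : (Sum.inl '' t : Set (V ⊕ Unit)).ncard = t.ncard :=
        Set.ncard_image_of_injective _ Sum.inl_injective
      have h2 := Set.ncard_le_ncard htsub (Set.toFinite s)
      omega
    -- find a triangle vertex not in t
    have habc : ∃ d, (d = a ∨ d = b ∨ d = c) ∧ d ∉ t := by
      by_contra h
      push_neg at h
      have hsub : ({a, b, c} : Set V) ⊆ t := by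
        rintro x hx
        simp only [Set.mem_insert_iff, Set.mem_singleton_iff] at hx
        exact h x hx
      have h3' : ({a, b, c} : Set V).ncard = 3 := by
        rw [Set.ncard_insert_of_notMem (by simp [hab.ne, hac.ne]) (Set.toFinite _),
          Set.ncard_pair hbc.ne]
      have := Set.ncard_le_ncard hsub (Set.toFinite t)
      omega
    obtain ⟨d, hd3, hdnt⟩ := habc
    have htc : (Γ.induce tᶜ).Connected := hconn t hts
    let f : (Γ.induce tᶜ) →g ((addTriVertex Γ a b c).induce sᶜ) :=
      { toFun := fun x => ⟨Sum.inl x.1, x.2⟩,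
        map_rel' := by
          rintro ⟨x, hx⟩ ⟨y, hy⟩ hxy
          have hxy' : Γ.Adj x y := hxy
          show (addTriVertex Γ a b c).Adj (Sum.inl x) (Sum.inl y)
          exact ⟨by simp [hxy'.ne], Or.inl hxy'⟩ }
    have hd' : Sum.inl d ∈ sᶜ := hdnt
    have key : ∀ u, ((addTriVertex Γ a b c).induce sᶜ).Reachable u ⟨Sum.inl d, hd'⟩ := by
      rintro ⟨(x | u), hu⟩
      · have hx : x ∈ tᶜ := hu
        have hr : (Γ.induce tᶜ).Reachable ⟨x, hx⟩ ⟨d, hdnt⟩ :=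
          htc.preconnected ⟨x, hx⟩ ⟨d, hdnt⟩
        exact hr.map f
      · cases u
        exact SimpleGraph.Adj.reachable ⟨by simp, Or.inl hd3⟩
    haveI : Nonempty ↥sᶜ := ⟨⟨Sum.inl d, hd'⟩⟩
    exact SimpleGraph.Connected.mk fun u v => (key u).trans (key v).symm
end

section
/- Let G be a finite simple graph with maximum degree at most 4 in which every vertex of degree 4 is a cut vertex, and suppose the line graph L(G) is 3-connected and G is not the star K_{1,3}. Then every vertex of degree 4 in G is adjacent to at least one vertex of degree 1. -/
open SimpleGraph

private lemma reach_closed {W : Type*} {H : SimpleGraph W} {P : W → Prop}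
    (hP : ∀ x y, H.Adj x y → P x → P y) {x y : W} (h : H.Reachable x y) (hx : P x) : P y := by
  obtain ⟨p⟩ := h
  induction p with
  | nil => exact hx
  | cons h' p ih => exact ih (hP _ _ h' hx)

private lemma walk_induce {V : Type*} {G : SimpleGraph V} {s : Set V} {x y : V}
    (p : G.Walk x y) (h : ∀ v ∈ p.support, v ∈ s) :
    (G.induce s).Reachable ⟨x, h x p.start_mem_support⟩ ⟨y, h y p.end_mem_support⟩ := by
  induction p with
  | nil => exact Reachable.refl _
  | @cons a b c hadj p ih =>
    have hb : ∀ v ∈ p.support, v ∈ s := fun v hv => h v (by simp [hv])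
    exact Reachable.trans (SimpleGraph.Adj.reachable (by exact hadj)) (ih hb)

private lemma key {V : Type*} [Fintype V] {G : SimpleGraph V} {u : V} {A : Set V}
    (huA : u ∉ A)
    (hclosed : ∀ ⦃v y : V⦄, v ∈ A → G.Adj v y → y ≠ u → y ∈ A)
    (hsmall : (G.neighborSet u ∩ A).ncard ≤ 2)
    {w w' : V} (hw : G.Adj u w) (hwA : w ∈ A) (hw' : G.Adj u w') (hw'A : w' ∉ A)
    (hdeg : ∀ v, G.Adj u v → ∃ x, G.Adj v x ∧ x ≠ u)
    (h3 : ∀ s : Set G.edgeSet, s.ncard ≤ 2 → (G.lineGraph.induce sᶜ).Connected) : False := by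
  classical
  set S : Set G.edgeSet := {e | ∃ v ∈ G.neighborSet u ∩ A, (e : Sym2 V) = s(u, v)} with hS
  have hScard : S.ncard ≤ 2 := by
    have hsub : S ⊆ (fun v : V =>
        if h : G.Adj u v then (⟨s(u, v), h⟩ : G.edgeSet) else ⟨s(u, w), hw⟩) ''
        (G.neighborSet u ∩ A) := by
      rintro e ⟨v, hv, he⟩
      refine ⟨v, hv, ?_⟩
      have h' : G.Adj u v := hv.1
      show (if h : G.Adj u v then (⟨s(u, v), h⟩ : G.edgeSet) else ⟨s(u, w), hw⟩) = e
      rw [dif_pos h']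
      exact Subtype.ext he.symm
    calc S.ncard ≤ _ := Set.ncard_le_ncard hsub (Set.toFinite _)
      _ ≤ (G.neighborSet u ∩ A).ncard := Set.ncard_image_le (Set.toFinite _)
      _ ≤ 2 := hsmall
  obtain ⟨x, hwx, hxu⟩ := hdeg w hw
  have hxA : x ∈ A := hclosed hwA hwx hxu
  have hwu : w ≠ u := fun h => huA (h ▸ hwA)
  set e1 : G.edgeSet := ⟨s(w, x), hwx⟩ with he1
  set e2 : G.edgeSet := ⟨s(u, w'), hw'⟩ with he2
  have he1S : e1 ∈ Sᶜ := by
    rintro ⟨v, hv, he⟩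
    have : u ∈ s(w, x) := by
      rw [show s(w, x) = s(u, v) from he]; simp
    rcases Sym2.mem_iff.mp this with h | h
    · exact hwu h.symm
    · exact hxu h.symm
  have he2S : e2 ∈ Sᶜ := by
    rintro ⟨v, hv, he⟩
    rcases Sym2.eq_iff.mp he with ⟨_, h⟩ | ⟨h, _⟩
    · exact hw'A (h ▸ hv.2)
    · exact huA (h ▸ hv.2)
  have hconn := h3 S hScard
  have hreach : (G.lineGraph.induce Sᶜ).Reachable ⟨e1, he1S⟩ ⟨e2, he2S⟩ :=
    hconn.preconnected _ _
  -- invariant: all endpoints in A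
  have hinv : ∀ v ∈ (e2 : Sym2 V), v ∈ A := by
    refine reach_closed (P := fun e : ↥(Sᶜ) => ∀ v ∈ ((e : G.edgeSet) : Sym2 V), v ∈ A)
      ?_ hreach ?_
    · rintro e f hadj hPe
      have hadj2 : G.lineGraph.Adj (e : G.edgeSet) (f : G.edgeSet) := hadj
      obtain ⟨hne, z, hz1, hz2⟩ := SimpleGraph.lineGraph_adj_iff_exists.mp hadj2
      have hzA : z ∈ A := hPe z hz1
      obtain ⟨y, hy⟩ := Sym2.mem_iff_exists.mp hz2
      have hadj' : G.Adj z y := by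
        have := (f : G.edgeSet).prop
        rw [hy] at this
        exact this
      have hyu : y ≠ u := by
        intro h
        subst h
        exact f.prop ⟨z, ⟨hadj'.symm, hzA⟩, by rw [hy, Sym2.eq_swap]⟩
      have hyA : y ∈ A := hclosed hzA hadj' hyu
      intro v hv
      rw [hy] at hv
      rcases Sym2.mem_iff.mp hv with h | h
      · exact h ▸ hzA
      · exact h ▸ hyA
    · intro v hv
      rcases Sym2.mem_iff.mp hv with h | h
      · exact h ▸ hwA
      · exact h ▸ hxA
  exact huA (hinv u (by simp [he2]))

/-- Let `G` be a finite connected graph of maximum degree at most 4 in which every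
degree-4 vertex is a cut vertex, whose line graph is 3-connected, and which is not the
star `K_{1,3}`. Then every degree-4 vertex of `G` is adjacent to a vertex of degree 1. -/
theorem stmt_11 {V : Type*} [Fintype V] (G : SimpleGraph V) (hG : G.Connected)
    (hmax : ∀ v : V, (G.neighborSet v).ncard ≤ 4)
    (hcut : ∀ u : V, (G.neighborSet u).ncard = 4 →
      ¬ (G.induce {x : V | x ≠ u}).Connected)
    (h3 : ThreeConnected G.lineGraph)
    (hstar : ¬ Nonempty (G ≃g completeBipartiteGraph Unit (Fin 3))) :
    ∀ u : V, (G.neighborSet u).ncard = 4 →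
      ∃ v : V, G.Adj u v ∧ (G.neighborSet v).ncard = 1 := by
  classical
  intro u hu
  by_contra hno
  push_neg at hno
  -- every neighbor of u has another neighbor ≠ u
  have hdeg : ∀ v, G.Adj u v → ∃ x, G.Adj v x ∧ x ≠ u := by
    intro v hv
    have h1 : 1 < (G.neighborSet v).ncard := by
      have hmem : u ∈ G.neighborSet v := hv.symm
      have hpos : 0 < (G.neighborSet v).ncard :=
        (Set.ncard_pos (Set.toFinite _)).mpr ⟨u, hmem⟩
      have := hno v hv
      omega
    obtain ⟨x, hx, hxu⟩ := Set.exists_ne_of_one_lt_ncard h1 u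
    exact ⟨x, hx, hxu⟩
  have hdisc := hcut u hu
  -- the punctured graph is nonempty
  have hNne : (G.neighborSet u).Nonempty :=
    (Set.ncard_pos (Set.toFinite _)).mp (by omega)
  obtain ⟨w0, hw0⟩ := hNne
  have hne : Nonempty ↥{x : V | x ≠ u} := ⟨⟨w0, (hw0 : G.Adj u w0).ne'⟩⟩
  have hpre : ¬ (G.induce {x : V | x ≠ u}).Preconnected := by
    intro h
    haveI := hne
    exact hdisc (SimpleGraph.Connected.mk h)
  rw [SimpleGraph.Preconnected] at hpre
  push_neg at hpre
  obtain ⟨a, b, hab⟩ := hpre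
  set A0 : Set V := {v : V | ∃ h : v ≠ u, (G.induce {x : V | x ≠ u}).Reachable a ⟨v, h⟩}
    with hA0
  have huA0 : u ∉ A0 := by rintro ⟨h, -⟩; exact h rfl
  have hclosedA0 : ∀ ⦃v y : V⦄, v ∈ A0 → G.Adj v y → y ≠ u → y ∈ A0 := by
    rintro v y ⟨hv, hr⟩ hadj hyu
    exact ⟨hyu, hr.trans (SimpleGraph.Adj.reachable (by exact hadj))⟩
  -- from any vertex of the punctured graph we can reach a neighbor of u
  have side : ∀ c : ↥{x : V | x ≠ u}, ∃ w, ∃ hw : G.Adj u w,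
      (G.induce {x : V | x ≠ u}).Reachable c ⟨w, hw.ne'⟩ := by
    intro c
    obtain ⟨p0⟩ := hG.preconnected u c.val
    have hcu : u ≠ c.val := Ne.symm c.prop
    obtain ⟨w, hadj, q, hq⟩ := SimpleGraph.Walk.exists_eq_cons_of_ne hcu p0.toPath.val
    have hpath := p0.toPath.prop
    rw [hq, SimpleGraph.Walk.cons_isPath_iff] at hpath
    have hsupp : ∀ v ∈ q.support, v ∈ {x : V | x ≠ u} := by
      intro v hv h
      exact hpath.2 (h ▸ hv)
    have := walk_induce q hsupp
    exact ⟨w, hadj, this.symm⟩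
  obtain ⟨wa, hwa, hra⟩ := side a
  obtain ⟨wb, hwb, hrb⟩ := side b
  have hwaA : wa ∈ A0 := ⟨hwa.ne', hra⟩
  have hwbA : wb ∉ A0 := by
    rintro ⟨h, hr⟩
    exact hab (hr.trans hrb.symm)
  have hsplit : (G.neighborSet u ∩ A0).ncard + (G.neighborSet u \ A0).ncard = 4 := by
    rw [Set.ncard_inter_add_ncard_diff_eq_ncard (G.neighborSet u) A0 (Set.toFinite _)]
    exact hu
  rcases le_or_gt ((G.neighborSet u ∩ A0).ncard) 2 with hle | hlt
  · exact key huA0 hclosedA0 hle hwa hwaA hwb hwbA hdeg h3.2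
  · -- use the other side
    set A1 : Set V := {v : V | v ≠ u ∧ v ∉ A0} with hA1
    have huA1 : u ∉ A1 := by rintro ⟨h, -⟩; exact h rfl
    have hclosedA1 : ∀ ⦃v y : V⦄, v ∈ A1 → G.Adj v y → y ≠ u → y ∈ A1 := by
      rintro v y ⟨hvu, hvA⟩ hadj hyu
      refine ⟨hyu, fun hy => hvA ?_⟩
      exact hclosedA0 hy hadj.symm hvu
    have heq : G.neighborSet u ∩ A1 = G.neighborSet u \ A0 := by
      ext v
      constructor
      · rintro ⟨h1, -, h2⟩; exact ⟨h1, h2⟩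
      · rintro ⟨h1, h2⟩; exact ⟨h1, (h1 : G.Adj u v).ne', h2⟩
    have hsmall : (G.neighborSet u ∩ A1).ncard ≤ 2 := by rw [heq]; omega
    have hwbA1 : wb ∈ A1 := ⟨hwb.ne', hwbA⟩
    have hwaA1 : wa ∉ A1 := fun h => h.2 hwaA
    exact key huA1 hclosedA1 hsmall hwb hwbA1 hwa hwaA1 hdeg h3.2
end

section
/- Let G be a finite simple connected graph with a vertex u of degree 4 whose neighbours a, b, c, d all have degree at least 2 in G. If in G minus the four edges ua, ub, uc, ud the components containing a and b coincide and do not contain c or d, then the pair of vertices {ua, ub} is a 2-cut of the line graph L(G): deleting both disconnects L(G) (assuming L(G) has at least 4 vertices). Hence L(G) is not 3-connected. -/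
open SimpleGraph

/-!
Let `A` be the component of `a` in `G` minus the four edges at `u`. Apart from `ua` and `ub`,
the only edges of `G` that meet `A` without lying in it would be `uc` and `ud`, whose ends
`u`, `c`, `d` are all outside `A`. So in `L(G) - {ua, ub}` no path leads from an edge `aa'`
(which exists because `deg a ≥ 2`) inside `A` to the edge `uc`.
-/

namespace SimpleGraph

variable {V W : Type*}

lemma Reachable.of_adj_closed_s12 {H : SimpleGraph W} {P : W → Prop}
    (hP : ∀ x y, H.Adj x y → P x → P y) {x y : W} (h : H.Reachable x y) (hx : P x) : P y := by
  rw [reachable_eq_reflTransGen] at h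
  induction h with
  | refl => exact hx
  | tail _ hyz ih => exact hP _ _ hyz ih

lemma not_connected_of_adj_closed {H : SimpleGraph W} {P : W → Prop}
    (hP : ∀ x y, H.Adj x y → P x → P y) {x y : W} (hx : P x) (hy : ¬ P y) : ¬ H.Connected :=
  fun hH => hy ((hH.preconnected x y).of_adj_closed_s12 hP hx)

variable {G : SimpleGraph V} {S : Set (Sym2 V)} {a : V}

lemma reachable_deleteEdges_of_mem_edge {e : Sym2 V} (he : e ∈ G.edgeSet) (heS : e ∉ S)
    {v w : V} (hv : v ∈ e) (hw : w ∈ e) (hav : (G.deleteEdges S).Reachable a v) :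
    (G.deleteEdges S).Reachable a w := by
  induction e using Sym2.ind with
  | _ p q =>
    have hpq : (G.deleteEdges S).Adj p q := (deleteEdges_adj ..).2 ⟨he, heS⟩
    rcases Sym2.mem_iff.1 hv with rfl | rfl <;> rcases Sym2.mem_iff.1 hw with rfl | rfl
    exacts [hav, hav.trans hpq.reachable, hav.trans hpq.symm.reachable, hav]

lemma eq_of_reachable_deleteEdges_of_incident {u : V} (hu : ∀ w, G.Adj u w → s(u, w) ∈ S)
    (hau : (G.deleteEdges S).Reachable a u) : a = u := by
  by_contra hne
  obtain ⟨w, huw⟩ := hau.symm.nonempty_neighborSet_left (Ne.symm hne)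
  exact ((deleteEdges_adj ..).1 huw).2 (hu w ((deleteEdges_adj ..).1 huw).1)

lemma not_connected_induce_lineGraph {T : Set G.edgeSet}
    (hTS : ∀ f ∈ T, (f : Sym2 V) ∈ S →
      ∀ v ∈ (f : Sym2 V), ¬ (G.deleteEdges S).Reachable a v)
    {e₁ e₂ : G.edgeSet} (he₁T : e₁ ∈ T) (he₂T : e₂ ∈ T)
    (he₁ : ∀ v ∈ (e₁ : Sym2 V), (G.deleteEdges S).Reachable a v)
    {v₂ : V} (hv₂ : v₂ ∈ (e₂ : Sym2 V)) (hav₂ : ¬ (G.deleteEdges S).Reachable a v₂) :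
    ¬ (G.lineGraph.induce T).Connected := by
  refine not_connected_of_adj_closed
    (P := fun f : T => ∀ v ∈ ((f : G.edgeSet) : Sym2 V), (G.deleteEdges S).Reachable a v)
    ?_ (x := ⟨e₁, he₁T⟩) (y := ⟨e₂, he₂T⟩) he₁ fun h => hav₂ (h v₂ hv₂)
  rintro f g hfg hf
  obtain ⟨-, v, hvf, hvg⟩ := lineGraph_adj_iff_exists.1 (comap_adj.1 hfg)
  have hav := hf v hvf
  have hgS : ((g : G.edgeSet) : Sym2 V) ∉ S := fun hgS => hTS g g.2 hgS v hvg hav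
  exact fun w hw => reachable_deleteEdges_of_mem_edge (g : G.edgeSet).2 hgS hvg hw hav

end SimpleGraph

lemma ThreeConnected.connected_induce_compl_pair {W : Type*} {H : SimpleGraph W}
    (hH : ThreeConnected H) (x y : W) : (H.induce {x, y}ᶜ).Connected :=
  hH.2 _ ((Set.ncard_insert_le x {y}).trans (by simp))

theorem stmt_12_general {V : Type*} (G : SimpleGraph V)
    (u a b c d : V)
    (hnbr : G.neighborSet u = {a, b, c, d})
    (hac : a ≠ c) (hbc : b ≠ c)
    (hda : 2 ≤ (G.neighborSet a).ncard)
    (hsep : ∀ w ∈ ({c, d} : Set V),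
      ¬ (G.deleteEdges {s(u, a), s(u, b), s(u, c), s(u, d)}).Reachable a w) :
    ¬ (G.lineGraph.induce
        {f : G.edgeSet | (f : Sym2 V) ≠ s(u, a) ∧ (f : Sym2 V) ≠ s(u, b)}).Connected ∧
      ¬ ThreeConnected G.lineGraph := by
  set S : Set (Sym2 V) := {s(u, a), s(u, b), s(u, c), s(u, d)}
  have hadj (w : V) : G.Adj u w ↔ w ∈ ({a, b, c, d} : Set V) := by
    rw [← hnbr, mem_neighborSet]
  have hua : G.Adj u a := (hadj a).2 (by simp)
  have hub : G.Adj u b := (hadj b).2 (by simp)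
  have huc : G.Adj u c := (hadj c).2 (by simp)
  have hu : ∀ w, G.Adj u w → s(u, w) ∈ S := fun w hw => by
    rcases (hadj w).1 hw with rfl | rfl | rfl | rfl <;> simp [S]
  have hau : ¬ (G.deleteEdges S).Reachable a u := fun h =>
    hua.ne (eq_of_reachable_deleteEdges_of_incident hu h).symm
  obtain ⟨a', haa', ha'u⟩ := Set.exists_ne_of_one_lt_ncard hda u
  have haa'S : s(a, a') ∉ S := by simp [S, hua.ne.symm, ha'u]
  have hcut : ¬ (G.lineGraph.induce
      {f : G.edgeSet | (f : Sym2 V) ≠ s(u, a) ∧ (f : Sym2 V) ≠ s(u, b)}).Connected := by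
    refine not_connected_induce_lineGraph (S := S) (a := a) ?_ (e₁ := ⟨s(a, a'), haa'⟩)
      (e₂ := ⟨s(u, c), huc⟩) ?_ ?_ ?_ (Sym2.mem_mk_left u c) hau
    · rintro f ⟨hfa, hfb⟩ (hf | hf | hf | hf)
      · exact absurd hf hfa
      · exact absurd hf hfb
      all_goals rw [hf, Sym2.ball]; exact ⟨hau, hsep _ (by simp)⟩
    · constructor <;> intro h <;> apply haa'S <;> simp [S, show s(a, a') = _ from h]
    · simp [hua.ne, hac.symm, hub.ne, hbc.symm]
    · exact Sym2.ball.2 ⟨Reachable.rfl, ((deleteEdges_adj ..).2 ⟨haa', haa'S⟩).reachable⟩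
  refine ⟨hcut, fun h3 => hcut ?_⟩
  have hT : {f : G.edgeSet | (f : Sym2 V) ≠ s(u, a) ∧ (f : Sym2 V) ≠ s(u, b)} =
      {⟨s(u, a), hua⟩, ⟨s(u, b), hub⟩}ᶜ := by
    ext f
    simp [Subtype.ext_iff]
  exact hT ▸ h3.connected_induce_compl_pair _ _

/-- Let `u` be a vertex of degree 4 in a finite connected graph `G`, with neighbours
`a, b, c, d`, all of degree at least 2. If after deleting the four edges at `u` the
vertices `a` and `b` lie in the same component, which contains neither `c` nor `d`,
then `{ua, ub}` is a 2-cut of the line graph; hence the line graph is not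
3-connected. -/
theorem stmt_12 {V : Type*} [Fintype V] (G : SimpleGraph V) (hG : G.Connected)
    (u a b c d : V)
    (hnbr : G.neighborSet u = {a, b, c, d})
    (hab : a ≠ b) (hac : a ≠ c) (had : a ≠ d) (hbc : b ≠ c) (hbd : b ≠ d) (hcd : c ≠ d)
    (hda : 2 ≤ (G.neighborSet a).ncard) (hdb : 2 ≤ (G.neighborSet b).ncard)
    (hdc : 2 ≤ (G.neighborSet c).ncard) (hdd : 2 ≤ (G.neighborSet d).ncard)
    (hreach : (G.deleteEdges {s(u, a), s(u, b), s(u, c), s(u, d)}).Reachable a b)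
    (hsep : ∀ w ∈ ({c, d} : Set V),
      ¬ (G.deleteEdges {s(u, a), s(u, b), s(u, c), s(u, d)}).Reachable a w)
    (hcard : 4 ≤ Nat.card G.edgeSet) :
    ¬ (G.lineGraph.induce
        {f : G.edgeSet | (f : Sym2 V) ≠ s(u, a) ∧ (f : Sym2 V) ≠ s(u, b)}).Connected ∧
      ¬ ThreeConnected G.lineGraph :=
  stmt_12_general G u a b c d hnbr hac hbc hda hsep
end

section
/- Let G be a finite simple graph with minimum degree at least 1, maximum degree at most 4, whose line graph L(G) is 3-connected, and suppose every vertex of degree 4 in G has exactly one neighbour of degree 1. Then the graph G₁ obtained from G by deleting all vertices of degree 1 has all vertex degrees equal to 2 or 3. -/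
open SimpleGraph

/-!
A 3-connected graph has minimum degree at least 3, and the edge `uv` has degree
`deg u + deg v - 2` in the line graph, so adjacent vertices satisfy `deg u + deg v ≥ 5`.
Hence a leaf is adjacent only to vertices of degree 4: deleting the leaves leaves vertices of
degree 2 or 3 untouched and costs each vertex of degree 4 exactly its one leaf.
-/

theorem ThreeConnected.three_le_ncard_neighborSet {W : Type*} [Finite W] {H : SimpleGraph W}
    (hH : ThreeConnected H) (x : W) : 3 ≤ (H.neighborSet x).ncard := by
  by_contra! hlt
  have hx : x ∉ H.neighborSet x := H.loopless.irrefl x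
  obtain ⟨y, hy⟩ : ∃ y, y ∉ insert x (H.neighborSet x) := by
    by_contra! hall
    have := (Set.eq_univ_of_forall hall) ▸ Set.ncard_insert_le x (H.neighborSet x)
    rw [Set.ncard_univ] at this
    linarith [hH.1]
  obtain ⟨hyx, hyN⟩ := not_or.1 hy
  -- deleting the at most two neighbours of `x` separates `x` from `y`
  obtain ⟨p⟩ := (hH.2 _ (by omega)).preconnected ⟨x, hx⟩ ⟨y, hyN⟩
  cases p with
  | nil => exact hyx rfl
  | cons hadj _ => exact (Set.mem_compl_iff _ _).1 (Subtype.prop _) hadj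

namespace SimpleGraph

variable {V : Type*} (G : SimpleGraph V)

theorem ncard_incidenceSet (v : V) : (G.incidenceSet v).ncard = (G.neighborSet v).ncard := by
  classical
  exact Nat.card_congr (G.incidenceSetEquivNeighborSet v)

theorem image_val_lineGraph_neighborSet {u v : V} (huv : G.Adj u v) :
    Subtype.val '' G.lineGraph.neighborSet ⟨s(u, v), huv⟩ =
      (G.incidenceSet u ∪ G.incidenceSet v) \ {s(u, v)} := by
  ext f
  constructor
  · rintro ⟨⟨f, hf⟩, hadj, rfl⟩
    obtain ⟨hne, x, hx, hxf⟩ := lineGraph_adj_iff_exists.1 hadj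
    refine ⟨?_, fun h => hne (Subtype.ext h.symm)⟩
    rcases Sym2.mem_iff.1 hx with rfl | rfl
    exacts [Or.inl ⟨hf, hxf⟩, Or.inr ⟨hf, hxf⟩]
  · rintro ⟨hf, hne⟩
    have hfE : f ∈ G.edgeSet := hf.elim (·.1) (·.1)
    refine ⟨⟨f, hfE⟩,
      lineGraph_adj_iff_exists.2 ⟨fun h => hne (congrArg Subtype.val h).symm, ?_⟩, rfl⟩
    rcases hf with hf | hf
    exacts [⟨u, Sym2.mem_mk_left u v, hf.2⟩, ⟨v, Sym2.mem_mk_right u v, hf.2⟩]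

theorem ncard_lineGraph_neighborSet [Finite V] {u v : V} (huv : G.Adj u v) :
    (G.lineGraph.neighborSet ⟨s(u, v), huv⟩).ncard + 2 =
      (G.neighborSet u).ncard + (G.neighborSet v).ncard := by
  have hunion := Set.ncard_union_add_ncard_inter (G.incidenceSet u) (G.incidenceSet v)
  rw [G.incidenceSet_inter_incidenceSet_of_adj huv, Set.ncard_singleton,
    ncard_incidenceSet, ncard_incidenceSet] at hunion
  have he : s(u, v) ∈ G.incidenceSet u ∪ G.incidenceSet v :=
    Set.mem_union_left _ ((G.mem_incidenceSet u v).2 huv)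
  have := (Set.ncard_pos (Set.toFinite _)).2 ⟨_, he⟩
  rw [← Set.ncard_image_of_injective _ Subtype.val_injective,
    image_val_lineGraph_neighborSet, Set.ncard_sdiff_singleton_of_mem he]
  omega

theorem five_le_ncard_neighborSet_add_of_adj [Finite V] (hG : ThreeConnected G.lineGraph)
    {u v : V} (huv : G.Adj u v) :
    5 ≤ (G.neighborSet u).ncard + (G.neighborSet v).ncard := by
  have := hG.three_le_ncard_neighborSet ⟨s(u, v), huv⟩
  have := G.ncard_lineGraph_neighborSet huv
  omega

theorem ncard_neighborSet_pos_of_adj [Finite V] {u v : V} (huv : G.Adj u v) :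
    0 < (G.neighborSet v).ncard :=
  (Set.ncard_pos (Set.toFinite _)).2 ⟨u, huv.symm⟩

theorem ncard_induce_neighborSet (s : Set V) (v : s) :
    ((G.induce s).neighborSet v).ncard = (G.neighborSet v ∩ s).ncard := by
  rw [← Set.ncard_image_of_injective _ Subtype.val_injective]
  congr 1
  ext x
  exact ⟨fun ⟨w, hw, hwx⟩ => hwx ▸ ⟨hw, w.2⟩, fun ⟨hx, hs⟩ => ⟨⟨x, hs⟩, hx, rfl⟩⟩

theorem neighborSet_inter_setOf_two_le [Finite V] (v : V) :
    G.neighborSet v ∩ {x | 2 ≤ (G.neighborSet x).ncard} =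
      G.neighborSet v \ {x | (G.neighborSet x).ncard = 1} := by
  ext w
  have := fun hw : G.Adj v w => G.ncard_neighborSet_pos_of_adj hw
  simp only [Set.mem_inter_iff, Set.mem_sdiff, Set.mem_ofPred_eq, mem_neighborSet]
  grind

end SimpleGraph

theorem stmt_17_general {V : Type*} [Fintype V] (G : SimpleGraph V)
    (hmax : ∀ v : V, (G.neighborSet v).ncard ≤ 4)
    (h3 : ThreeConnected G.lineGraph)
    (hfour : ∀ u : V, (G.neighborSet u).ncard = 4 →
      ∃! v : V, G.Adj u v ∧ (G.neighborSet v).ncard = 1) :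
    ∀ v : {x : V // 2 ≤ (G.neighborSet x).ncard},
      ((G.induce {x : V | 2 ≤ (G.neighborSet x).ncard}).neighborSet v).ncard = 2 ∨
        ((G.induce {x : V | 2 ≤ (G.neighborSet x).ncard}).neighborSet v).ncard = 3 := by
  rintro ⟨v, hv⟩
  rw [G.ncard_induce_neighborSet, G.neighborSet_inter_setOf_two_le]
  dsimp only
  rcases (hmax v).lt_or_eq with hle3 | hdeg4
  · have hnoleaf : G.neighborSet v \ {x | (G.neighborSet x).ncard = 1} = G.neighborSet v :=
      sdiff_eq_self_iff_disjoint.2 <| Set.disjoint_left.2 fun w hwleaf hw => by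
        have hw1 : (G.neighborSet w).ncard = 1 := hwleaf
        have := G.five_le_ncard_neighborSet_add_of_adj h3 hw
        omega
    rw [hnoleaf]
    omega
  · obtain ⟨w, ⟨hw, hw1⟩, huniq⟩ := hfour v hdeg4
    have hleaves : G.neighborSet v ∩ {x | (G.neighborSet x).ncard = 1} = {w} :=
      Set.eq_singleton_iff_unique_mem.2 ⟨⟨hw, hw1⟩, huniq⟩
    rw [← Set.sdiff_inter_self_eq_sdiff, Set.inter_comm, hleaves,
      Set.ncard_sdiff_singleton_of_mem ((G.mem_neighborSet v w).2 hw), hdeg4]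
    exact Or.inr rfl

/-- Let `G` be a finite connected graph with all degrees between 1 and 4, whose line
graph is 3-connected, in which every degree-4 vertex has exactly one neighbour of
degree 1. Then the graph obtained from `G` by deleting all vertices of degree 1 has all
degrees equal to 2 or 3. -/
theorem stmt_17 {V : Type*} [Fintype V] (G : SimpleGraph V) (hG : G.Connected)
    (hmin : ∀ v : V, 1 ≤ (G.neighborSet v).ncard)
    (hmax : ∀ v : V, (G.neighborSet v).ncard ≤ 4)
    (h3 : ThreeConnected G.lineGraph)
    (hfour : ∀ u : V, (G.neighborSet u).ncard = 4 →
      ∃! v : V, G.Adj u v ∧ (G.neighborSet v).ncard = 1) :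
    ∀ v : {x : V // 2 ≤ (G.neighborSet x).ncard},
      ((G.induce {x : V | 2 ≤ (G.neighborSet x).ncard}).neighborSet v).ncard = 2 ∨
        ((G.induce {x : V | 2 ≤ (G.neighborSet x).ncard}).neighborSet v).ncard = 3 :=
  stmt_17_general G hmax h3 hfour
end
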